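/- arXiv:1305.4813 — 4 statements merged into one kernel-verified Lean document; each statement's English description precedes it below -/
import Mathlib

section
/- Let c ∈ ℂ and let ω be a real-valued function that is continuous on the closed disk {w ∈ ℂ : |w − c| ≤ 1} and twice continuously differentiable on the open disk D(c,1) = {w : |w − c| < 1}, satisfying the sinh-Gordon equation Δω = 2·sinh(2ω) on D(c,1). Then for every w ∈ D(c,1), |ω(w)| ≤ ln(2/(1 − |w − c|²)) + (1/2)·ln((2+√5)/4). In particular, |ω(c)| ≤ ln 2 + (1/2)·ln((2+√5)/4). -/
/-!
The log-density `log ρ` of the Poincaré metric `ρ(w) = 2 / (1 - |w - c|²)` solves `Δ log ρ = ρ²`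
and tends to `+∞` at the boundary circle. As `ω` is bounded on the closed disk, `η = ω - log ρ`
attains its maximum at an interior point `w₀`, where `Δη ≤ 0`, that is `2 sinh (2ω) ≤ ρ²`.
Since `ρ ≥ 2`, this quadratic inequality in `e^{2ω}` forces `e^{2η(w₀)} ≤ (2 + √5)/4`, and
`η ≤ η(w₀)` everywhere. The lower bound follows by applying this to `-ω`.
-/

open Filter Topology Metric Real
open scoped Laplacian RealInnerProductSpace

/-- The Euclidean Laplacian of a real-valued function on (an open subset of) `ℂ ≅ ℝ²`:
`Δf = ∂²f/∂x² + ∂²f/∂y²`. -/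
noncomputable def laplacian (f : ℂ → ℝ) (z : ℂ) : ℝ :=
  fderiv ℝ (fun w => fderiv ℝ f w 1) z 1 +
    fderiv ℝ (fun w => fderiv ℝ f w Complex.I) z Complex.I

theorem IsLocalMax.deriv_deriv_nonpos {f : ℝ → ℝ} {a : ℝ} (h : IsLocalMax f a)
    (hc : ContinuousAt f a) : deriv (deriv f) a ≤ 0 := by
  by_contra! hpos
  have hconst : f =ᶠ[𝓝 a] fun _ => f a := by
    filter_upwards [isLocalMin_of_deriv_deriv_pos hpos h.deriv_eq_zero hc, h] with x hmin hmax
    exact le_antisymm hmax hmin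
  have hderiv : deriv f =ᶠ[𝓝 a] fun _ => 0 := by
    filter_upwards [hconst.eventuallyEq_nhds] with x hx
    simpa using hx.deriv_eq
  simp [hderiv.deriv_eq] at hpos

section SecondDerivative

variable {E : Type*} [NormedAddCommGroup E] [NormedSpace ℝ E]

theorem deriv_deriv_comp_add_smul {f : E → ℝ} {a : E} (hf : ContDiffAt ℝ 2 f a) (v : E) :
    deriv (deriv fun t : ℝ => f (a + t • v)) 0 = fderiv ℝ (fderiv ℝ f) a v v := by
  have hline : ∀ t : ℝ, HasDerivAt (fun t : ℝ => a + t • v) v t := fun t => by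
    simpa using ((hasDerivAt_id t).smul_const v).const_add a
  have hderiv : deriv (fun t : ℝ => f (a + t • v)) =ᶠ[𝓝 0]
      fun t => fderiv ℝ f (a + t • v) v := by
    have hnear : ∀ᶠ t in 𝓝 (0 : ℝ), ContDiffAt ℝ 2 f (a + t • v) :=
      (hline 0).continuousAt.eventually (by simpa using hf.eventually (by simp))
    filter_upwards [hnear] with t ht
    exact ((ht.differentiableAt (by simp)).hasFDerivAt.comp_hasDerivAt t (hline t)).deriv
  have hf' : DifferentiableAt ℝ (fderiv ℝ f) a :=
    (hf.fderiv_right (m := 1) (by norm_num)).differentiableAt (by simp)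
  have hcomp := hf'.hasFDerivAt.comp_hasDerivAt_of_eq 0 (hline 0) (by simp)
  rw [hderiv.deriv_eq]
  exact (hcomp.clm_apply (hasDerivAt_const 0 v)).deriv.trans (by simp)

theorem IsLocalMax.fderiv_fderiv_apply_self_nonpos {f : E → ℝ} {a : E} (h : IsLocalMax f a)
    (hf : ContDiffAt ℝ 2 f a) (v : E) : fderiv ℝ (fderiv ℝ f) a v v ≤ 0 := by
  have hline : Continuous fun t : ℝ => a + t • v := by fun_prop
  rw [← deriv_deriv_comp_add_smul hf v]
  refine IsLocalMax.deriv_deriv_nonpos ?_ ?_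
  · exact IsLocalMax.comp_continuous (by simpa using h) hline.continuousAt
  · exact ContinuousAt.comp (by simpa using hf.continuousAt) hline.continuousAt

end SecondDerivative

theorem IsLocalMax.laplacian_nonpos {E : Type*} [NormedAddCommGroup E] [InnerProductSpace ℝ E]
    [FiniteDimensional ℝ E] {f : E → ℝ} {a : E} (h : IsLocalMax f a) (hf : ContDiffAt ℝ 2 f a) :
    Δ f a ≤ 0 := by
  rw [InnerProductSpace.laplacian_eq_iteratedFDeriv_stdOrthonormalBasis]
  exact Finset.sum_nonpos fun i _ => by
    simpa [iteratedFDeriv_two_apply] using h.fderiv_fderiv_apply_self_nonpos hf _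

theorem laplacian_eq_laplacian_of_contDiffAt {f : ℂ → ℝ} {z : ℂ} (hf : ContDiffAt ℝ 2 f z) :
    laplacian f z = Δ f z := by
  have hf' : DifferentiableAt ℝ (fderiv ℝ f) z :=
    (hf.fderiv_right (m := 1) (by norm_num)).differentiableAt (by simp)
  simp [laplacian, InnerProductSpace.laplacian_eq_iteratedFDeriv_complexPlane,
    iteratedFDeriv_two_apply, fderiv_clm_apply hf' (differentiableAt_const _)]

theorem tendsto_log_two_div_one_sub_sq :
    Tendsto (fun r : ℝ => log (2 / (1 - r ^ 2))) (𝓝[<] 1) atTop := by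
  have h : Tendsto (fun r : ℝ => 1 - r ^ 2) (𝓝[<] 1) (𝓝[>] 0) := by
    refine tendsto_nhdsWithin_of_tendsto_nhds_of_eventually_within _ ?_ ?_
    · exact tendsto_nhdsWithin_of_tendsto_nhds
        ((by fun_prop : Continuous fun r : ℝ => 1 - r ^ 2).tendsto' 1 0 (by norm_num))
    · filter_upwards [Ioo_mem_nhdsLT (show (0 : ℝ) < 1 by norm_num)] with r hr
      simp only [Set.mem_Ioi, sub_pos]
      nlinarith [hr.1, hr.2]
  simpa [Function.comp_def, div_eq_mul_inv] using
    tendsto_log_atTop.comp ((tendsto_inv_nhdsGT_zero.comp h).const_mul_atTop two_pos)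

section PoincareDensity

variable {E : Type*} [NormedAddCommGroup E]

noncomputable def poincareDensity (c x : E) : ℝ := 2 / (1 - ‖x - c‖ ^ 2)

variable {c x : E}

theorem one_sub_norm_sub_sq_pos (hx : x ∈ ball c 1) : 0 < 1 - ‖x - c‖ ^ 2 := by
  have := mem_ball_iff_norm.1 hx
  nlinarith [norm_nonneg (x - c)]

theorem poincareDensity_mul_one_sub (hx : x ∈ ball c 1) :
    poincareDensity c x * (1 - ‖x - c‖ ^ 2) = 2 :=
  div_mul_cancel₀ _ (one_sub_norm_sub_sq_pos hx).ne'

theorem two_le_poincareDensity (hx : x ∈ ball c 1) : 2 ≤ poincareDensity c x := by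
  rw [poincareDensity, le_div_iff₀ (one_sub_norm_sub_sq_pos hx)]
  nlinarith [norm_nonneg (x - c)]

theorem poincareDensity_pos (hx : x ∈ ball c 1) : 0 < poincareDensity c x :=
  two_pos.trans_le (two_le_poincareDensity hx)

theorem continuousOn_poincareDensity : ContinuousOn (poincareDensity c) (ball c 1) :=
  continuousOn_const.div (by fun_prop) fun _ hx => (one_sub_norm_sub_sq_pos hx).ne'

end PoincareDensity

section PoincareDensityDeriv

variable {E : Type*} [NormedAddCommGroup E] [InnerProductSpace ℝ E] {c x : E}

theorem contDiffOn_log_poincareDensity :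
    ContDiffOn ℝ 2 (fun y => log (poincareDensity c y)) (ball c 1) := by
  refine ContDiffOn.log ?_ fun y hy => (poincareDensity_pos hy).ne'
  refine contDiffOn_const.div ?_ fun y hy => (one_sub_norm_sub_sq_pos hy).ne'
  exact (contDiff_const.sub ((contDiff_norm_sq ℝ).comp (contDiff_id.sub contDiff_const))).contDiffOn

theorem hasFDerivAt_poincareDensity (hx : x ∈ ball c 1) :
    HasFDerivAt (poincareDensity c) (poincareDensity c x ^ 2 • innerSL ℝ (x - c)) x := by
  have hu := (((hasFDerivAt_id x).sub_const c).norm_sq).const_sub 1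
  have := ((hasDerivAt_inv (one_sub_norm_sub_sq_pos hx).ne').comp_hasFDerivAt x hu).const_mul 2
  refine this.congr_fderiv ?_
  ext v
  simp [poincareDensity]
  field_simp

theorem hasFDerivAt_log_poincareDensity (hx : x ∈ ball c 1) :
    HasFDerivAt (fun y => log (poincareDensity c y))
      (poincareDensity c x • innerSL ℝ (x - c)) x := by
  refine ((hasFDerivAt_poincareDensity hx).log (poincareDensity_pos hx).ne').congr_fderiv ?_
  rw [smul_smul, sq, inv_mul_cancel_left₀ (poincareDensity_pos hx).ne']

theorem fderiv_fderiv_log_poincareDensity (hx : x ∈ ball c 1) (v : E) :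
    fderiv ℝ (fun y => fderiv ℝ (fun y => log (poincareDensity c y)) y v) x v =
      poincareDensity c x ^ 2 * ⟪x - c, v⟫ ^ 2 + poincareDensity c x * ‖v‖ ^ 2 := by
  have hderiv : (fun y => fderiv ℝ (fun y => log (poincareDensity c y)) y v) =ᶠ[𝓝 x]
      fun y => poincareDensity c y * ⟪v, y - c⟫ := by
    filter_upwards [isOpen_ball.mem_nhds hx] with y hy
    rw [(hasFDerivAt_log_poincareDensity hy).fderiv, smul_apply, innerSL_apply_apply, smul_eq_mul,
      real_inner_comm]
  have hinner : HasFDerivAt (fun y => ⟪v, y - c⟫) (innerSL ℝ v) x :=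
    (innerSL ℝ v).hasFDerivAt.comp x ((hasFDerivAt_id x).sub_const c)
  rw [hderiv.fderiv_eq, ((hasFDerivAt_poincareDensity hx).fun_mul hinner).fderiv]
  simp only [add_apply, smul_apply, innerSL_apply_apply, smul_eq_mul, real_inner_self_eq_norm_sq,
    real_inner_comm v]
  ring

end PoincareDensityDeriv

theorem laplacian_log_poincareDensity {c z : ℂ} (hz : z ∈ ball c 1) :
    laplacian (fun y => log (poincareDensity c y)) z = poincareDensity c z ^ 2 := by
  have hρ := poincareDensity_mul_one_sub hz
  rw [laplacian, fderiv_fderiv_log_poincareDensity hz, fderiv_fderiv_log_poincareDensity hz]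
  simp only [Complex.sq_norm, Complex.normSq_apply, Complex.inner, Complex.sub_re, Complex.sub_im,
    Complex.mul_re, Complex.conj_re, Complex.conj_im, Complex.I_re, Complex.I_im, Complex.one_re,
    Complex.one_im, map_sub, norm_one, Complex.norm_I] at hρ ⊢
  linear_combination (-(poincareDensity c z)) * hρ

/-- The largest `x` with `x - x⁻¹ ≤ A` is `(A + √(A² + 4)) / 2`; its ratio to `A` decreases in `A`
and equals `(2 + √5) / 4` at `A = 4`. -/
theorem le_mul_of_sub_inv_le {x A : ℝ} (hx : 0 < x) (hA : 4 ≤ A) (h : x - x⁻¹ ≤ A) :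
    x ≤ (2 + √5) / 4 * A := by
  have hquad : x ^ 2 ≤ A * x + 1 := by
    have := mul_le_mul_of_nonneg_right h hx.le
    rwa [sub_mul, inv_mul_cancel₀ hx.ne', ← sq, sub_le_iff_le_add] at this
  set k := (2 + √5) / 4 with hk
  have hk1 : 1 < k := by nlinarith [Real.sqrt_nonneg 5, Real.sq_sqrt (show (0 : ℝ) ≤ 5 by norm_num)]
  have hkA : k * (k - 1) * A ^ 2 = A ^ 2 / 16 := by
    rw [hk]
    linear_combination A ^ 2 / 16 * Real.sq_sqrt (show (0 : ℝ) ≤ 5 by norm_num)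
  by_contra! hlt
  nlinarith [mul_pos (sub_pos.2 hlt) (by nlinarith : 0 < x + (k - 1) * A)]

theorem sub_log_le_of_two_mul_sinh_le {a ρ : ℝ} (hρ : 2 ≤ ρ) (h : 2 * sinh (2 * a) ≤ ρ ^ 2) :
    a - log ρ ≤ 1 / 2 * log ((2 + √5) / 4) := by
  have hρ0 : 0 < ρ := two_pos.trans_le hρ
  have hexp : exp (2 * a) ≤ (2 + √5) / 4 * ρ ^ 2 := by
    refine le_mul_of_sub_inv_le (exp_pos _) (by nlinarith) ?_
    rwa [sinh_eq, exp_neg, mul_div_cancel₀ _ two_ne_zero] at h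
  have hlog := log_le_log (exp_pos _) hexp
  rw [log_exp, log_mul (by positivity) (by positivity), log_pow] at hlog
  push_cast at hlog
  linarith

theorem exists_isLocalMax_sub_log_poincareDensity {E : Type*} [NormedAddCommGroup E]
    [ProperSpace E] {c w : E} {ω : E → ℝ} (hbdd : BddAbove (ω '' ball c 1))
    (hω : ContinuousOn ω (ball c 1)) (hw : w ∈ ball c 1) :
    ∃ w₀ ∈ ball c 1, IsLocalMax (fun x => ω x - log (poincareDensity c x)) w₀ ∧
      ω w - log (poincareDensity c w) ≤ ω w₀ - log (poincareDensity c w₀) := by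
  set η := fun x => ω x - log (poincareDensity c x)
  obtain ⟨M, hM⟩ := hbdd
  obtain ⟨r, hrM, hwr, hr1⟩ : ∃ r, M - η w < log (2 / (1 - r ^ 2)) ∧ r ∈ Set.Ioo ‖w - c‖ 1 :=
    ((tendsto_log_two_div_one_sub_sq.eventually (eventually_gt_atTop _)).and
      (Ioo_mem_nhdsLT (mem_ball_iff_norm.1 hw))).exists
  have hrball : closedBall c r ⊆ ball c 1 := closedBall_subset_ball hr1
  have hηcont : ContinuousOn η (closedBall c r) := by
    refine (hω.sub (continuousOn_poincareDensity.log fun x hx => ?_)).mono hrball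
    exact (poincareDensity_pos hx).ne'
  have hsphere : ∀ x ∈ closedBall c r \ ball c r, η x < η w := by
    intro x hx
    rw [closedBall_sdiff_ball, mem_sphere_iff_norm] at hx
    have := hM (Set.mem_image_of_mem ω (hrball (sphere_subset_closedBall
      (mem_sphere_iff_norm.2 hx))))
    show ω x - log (2 / (1 - ‖x - c‖ ^ 2)) < η w
    rw [hx]
    linarith
  obtain ⟨w₀, hw₀, hmax⟩ := (isCompact_closedBall c r).exists_isMaxOn_mem_subset hηcont
    (mem_closedBall_iff_norm.2 hwr.le) hsphere
  exact ⟨w₀, ball_subset_ball hr1.le hw₀,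
    hmax.isLocalMax (mem_of_superset (isOpen_ball.mem_nhds hw₀) ball_subset_closedBall),
    hmax (mem_closedBall_iff_norm.2 hwr.le)⟩

theorem le_log_poincareDensity_add {c : ℂ} {ω : ℂ → ℝ} (hbdd : BddAbove (ω '' ball c 1))
    (hω : ContDiffOn ℝ 2 ω (ball c 1))
    (hsub : ∀ z ∈ ball c 1, 2 * sinh (2 * ω z) ≤ laplacian ω z) :
    ∀ w ∈ ball c 1, ω w ≤ log (poincareDensity c w) + 1 / 2 * log ((2 + √5) / 4) := by
  intro w hw
  obtain ⟨w₀, hw₀, hmax, hle⟩ :=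
    exists_isLocalMax_sub_log_poincareDensity hbdd hω.continuousOn hw
  have hωw₀ : ContDiffAt ℝ 2 ω w₀ := hω.contDiffAt (isOpen_ball.mem_nhds hw₀)
  have hρw₀ : ContDiffAt ℝ 2 (fun x => log (poincareDensity c x)) w₀ :=
    contDiffOn_log_poincareDensity.contDiffAt (isOpen_ball.mem_nhds hw₀)
  have hlap : laplacian ω w₀ - poincareDensity c w₀ ^ 2 ≤ 0 := by
    rw [← laplacian_log_poincareDensity hw₀, laplacian_eq_laplacian_of_contDiffAt hωw₀,
      laplacian_eq_laplacian_of_contDiffAt hρw₀, ← hωw₀.laplacian_sub hρw₀]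
    exact hmax.laplacian_nonpos (hωw₀.sub hρw₀)
  have := sub_log_le_of_two_mul_sinh_le (two_le_poincareDensity hw₀)
    ((hsub w₀ hw₀).trans (sub_nonpos.1 hlap))
  linarith

/-- Interior estimate for solutions of the sinh-Gordon equation `Δω = 2 sinh(2ω)` on a
unit disk: comparison with the log-density `ω₂(w) = ln (2/(1 − |w − c|²))` of the
hyperbolic metric gives `|ω(w)| ≤ ω₂(w) + ½ ln((2+√5)/4)`. -/
theorem stmt1 (c : ℂ) (ω : ℂ → ℝ)
    (hcont : ContinuousOn ω {w : ℂ | ‖w - c‖ ≤ 1})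
    (hC2 : ContDiffOn ℝ 2 ω {w : ℂ | ‖w - c‖ < 1})
    (heq : ∀ w : ℂ, ‖w - c‖ < 1 →
      laplacian ω w = 2 * Real.sinh (2 * ω w)) :
    (∀ w : ℂ, ‖w - c‖ < 1 →
      |ω w| ≤ Real.log (2 / (1 - ‖w - c‖ ^ 2)) +
        (1 / 2) * Real.log ((2 + Real.sqrt 5) / 4)) ∧
      |ω c| ≤ Real.log 2 + (1 / 2) * Real.log ((2 + Real.sqrt 5) / 4) := by
  have hball : {w : ℂ | ‖w - c‖ < 1} = ball c 1 := by ext; simp [dist_eq_norm]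
  have hclosedBall : {w : ℂ | ‖w - c‖ ≤ 1} = closedBall c 1 := by ext; simp [dist_eq_norm]
  rw [hball] at hC2
  rw [hclosedBall] at hcont
  have hbdd : ∀ f : ℂ → ℝ, ContinuousOn f (closedBall c 1) → BddAbove (f '' ball c 1) :=
    fun f hf => ((isCompact_closedBall c 1).bddAbove_image hf).mono
      (Set.image_mono ball_subset_closedBall)
  have hupper := le_log_poincareDensity_add (hbdd ω hcont) hC2 fun z hz =>
    (heq z (mem_ball_iff_norm.1 hz)).ge
  have hlower := le_log_poincareDensity_add (hbdd _ hcont.neg) hC2.neg fun z hz => by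
    have hωz : ContDiffAt ℝ 2 ω z := hC2.contDiffAt (isOpen_ball.mem_nhds hz)
    have hωz' : ContDiffAt ℝ 2 (-ω) z := hωz.neg
    rw [laplacian_eq_laplacian_of_contDiffAt hωz', InnerProductSpace.laplacian_neg, Pi.neg_apply,
      Pi.neg_apply, ← laplacian_eq_laplacian_of_contDiffAt hωz, heq z (mem_ball_iff_norm.1 hz),
      mul_neg, sinh_neg, mul_neg]
  have hmain : ∀ w : ℂ, ‖w - c‖ < 1 → |ω w| ≤ log (2 / (1 - ‖w - c‖ ^ 2)) +
      1 / 2 * log ((2 + √5) / 4) := fun w hw => by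
    have hw' := mem_ball_iff_norm.2 hw
    exact abs_le.2 ⟨neg_le.1 (hlower w hw'), hupper w hw'⟩
  exact ⟨hmain, by simpa using hmain c (by simp)⟩
end

section
/- Let Ω ⊂ ℂ be a bounded open set and let ω, F be real-valued functions continuous on the closure of Ω and twice continuously differentiable on Ω, such that Δω = 2·sinh(2ω) on Ω, ΔF = 4F on Ω, F ≥ 0 on the closure of Ω, and ω ≤ F on the boundary ∂Ω. Then ω ≤ F everywhere on Ω. -/
open Filter Topology
open scoped Laplacian

theorem IsLocalMin.deriv_deriv_nonneg {g : ℝ → ℝ} {x : ℝ} (h : IsLocalMin g x)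
    (hg : ContinuousAt g x) : 0 ≤ deriv (deriv g) x := by
  by_contra! hneg
  -- A negative second derivative makes `x` a local maximum too, so `g` is locally constant.
  have hmax : IsLocalMax g x := isLocalMax_of_deriv_deriv_neg hneg h.deriv_eq_zero hg
  have hconst : g =ᶠ[𝓝 x] fun _ => g x := by
    filter_upwards [h, hmax] with y hy₁ hy₂ using le_antisymm hy₂ hy₁
  have hderiv : deriv g =ᶠ[𝓝 x] fun _ => 0 := by
    simpa using hconst.deriv
  simp [hderiv.deriv_eq] at hneg

section NormedSpace

variable {E : Type*} [NormedAddCommGroup E] [NormedSpace ℝ E]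

theorem fderiv_fderiv_apply_eq_iteratedFDeriv {G : Type*} [NormedAddCommGroup G]
    [NormedSpace ℝ G] {f : E → G} {a : E} (hf : DifferentiableAt ℝ (fderiv ℝ f) a) (v w : E) :
    fderiv ℝ (fun x => fderiv ℝ f x v) a w = iteratedFDeriv ℝ 2 f a ![w, v] := by
  rw [fderiv_clm_apply hf (differentiableAt_const v), iteratedFDeriv_two_apply]
  simp

theorem IsLocalMin.iteratedFDeriv_two_nonneg {f : E → ℝ} {a : E} (h : IsLocalMin f a)
    (hf : ContDiffAt ℝ 2 f a) (v : E) : 0 ≤ iteratedFDeriv ℝ 2 f a ![v, v] := by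
  set line : ℝ → E := fun t => a + t • v
  have hline : ∀ t, HasDerivAt line v t := fun t => by
    simpa only [id, one_smul] using ((hasDerivAt_id t).smul_const v).const_add a
  have hline0 : line 0 = a := by simp [line]
  have hmin : IsLocalMin (f ∘ line) 0 :=
    (hline0 ▸ h).comp_continuous (hline 0).continuousAt
  have hdiff : ∀ᶠ t in 𝓝 (0 : ℝ), DifferentiableAt ℝ f (line t) := by
    have := (hf.eventually (by simp)).mono fun _ hx => hx.differentiableAt (by simp)
    exact (hline 0).continuousAt.tendsto.eventually (hline0 ▸ this)
  have hderiv : deriv (f ∘ line) =ᶠ[𝓝 0] fun t => fderiv ℝ f (line t) v := by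
    filter_upwards [hdiff] with t ht
    exact (ht.hasFDerivAt.comp_hasDerivAt t (hline t)).deriv
  have hf' : DifferentiableAt ℝ (fderiv ℝ f) a :=
    (hf.fderiv_right (m := 1) le_rfl).differentiableAt one_ne_zero
  have hsecond : HasDerivAt (fun t => fderiv ℝ f (line t) v)
      (iteratedFDeriv ℝ 2 f a ![v, v]) 0 := by
    rw [← fderiv_fderiv_apply_eq_iteratedFDeriv hf']
    have : DifferentiableAt ℝ (fun x => fderiv ℝ f x v) (line 0) := by
      rw [hline0]; fun_prop
    exact this.hasFDerivAt.comp_hasDerivAt 0 (hline 0) |>.congr_deriv (by rw [hline0])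
  have := hmin.deriv_deriv_nonneg ((hline0 ▸ hf.continuousAt).comp (hline 0).continuousAt)
  rwa [hderiv.deriv_eq, hsecond.deriv] at this

end NormedSpace

theorem IsLocalMin.laplacian_nonneg {E : Type*} [NormedAddCommGroup E] [InnerProductSpace ℝ E]
    [FiniteDimensional ℝ E] {f : E → ℝ} {a : E} (h : IsLocalMin f a) (hf : ContDiffAt ℝ 2 f a) :
    0 ≤ Δ f a := by
  rw [InnerProductSpace.laplacian_eq_iteratedFDeriv_stdOrthonormalBasis]
  exact Finset.sum_nonneg fun i _ => h.iteratedFDeriv_two_nonneg hf _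

theorem laplacian_eq_laplacian_of_differentiableAt {f : ℂ → ℝ} {z : ℂ}
    (hf : DifferentiableAt ℝ (fderiv ℝ f) z) : laplacian f z = Δ f z := by
  rw [InnerProductSpace.laplacian_eq_iteratedFDeriv_complexPlane, laplacian,
    fderiv_fderiv_apply_eq_iteratedFDeriv hf, fderiv_fderiv_apply_eq_iteratedFDeriv hf]

/-- Maximum-principle comparison: if `Δω = 2 sinh(2ω)` and `ΔF = 4F` on a bounded open
set `Ω`, with `F ≥ 0` on the closure and `ω ≤ F` on the boundary, then `ω ≤ F` on `Ω`. -/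
theorem stmt2 (Ω : Set ℂ) (hΩopen : IsOpen Ω) (hΩbdd : Bornology.IsBounded Ω)
    (ω F : ℂ → ℝ)
    (hωcont : ContinuousOn ω (closure Ω)) (hFcont : ContinuousOn F (closure Ω))
    (hωC2 : ContDiffOn ℝ 2 ω Ω) (hFC2 : ContDiffOn ℝ 2 F Ω)
    (hωeq : ∀ z ∈ Ω, laplacian ω z = 2 * Real.sinh (2 * ω z))
    (hFeq : ∀ z ∈ Ω, laplacian F z = 4 * F z)
    (hFpos : ∀ z ∈ closure Ω, 0 ≤ F z)
    (hbdry : ∀ z ∈ frontier Ω, ω z ≤ F z) :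
    ∀ z ∈ Ω, ω z ≤ F z := by
  intro z hz
  by_contra! hlt
  obtain ⟨q, hq, hmin⟩ := hΩbdd.isCompact_closure.exists_isMinOn ⟨z, subset_closure hz⟩
    (hFcont.sub hωcont)
  have hq_lt : F q < ω q := by
    have := isMinOn_iff.1 hmin z (subset_closure hz)
    simp only [Pi.sub_apply] at this
    linarith
  have hqΩ : q ∈ Ω := by
    by_contra hqΩ
    linarith [hbdry q ⟨hq, by rwa [hΩopen.interior_eq]⟩]
  have hΩq : Ω ∈ 𝓝 q := hΩopen.mem_nhds hqΩ
  have hF := hFC2.contDiffAt hΩq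
  have hω := hωC2.contDiffAt hΩq
  have hloc : IsLocalMin (F - ω) q := mem_of_superset hΩq fun w hw => hmin (subset_closure hw)
  have hΔ : ∀ f : ℂ → ℝ, ContDiffAt ℝ 2 f q → laplacian f q = Δ f q := fun f hf =>
    laplacian_eq_laplacian_of_differentiableAt
      ((hf.fderiv_right (m := 1) le_rfl).differentiableAt one_ne_zero)
  have hlap : Δ (F - ω) q = 4 * F q - 2 * Real.sinh (2 * ω q) := by
    rw [hF.laplacian_sub hω, ← hΔ F hF, ← hΔ ω hω, hFeq q hqΩ, hωeq q hqΩ]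
  have hsinh : 2 * ω q ≤ Real.sinh (2 * ω q) :=
    Real.self_le_sinh_iff.2 (by linarith [hFpos q hq])
  linarith [hloc.laplacian_nonneg (hF.sub hω)]
end

section
/- For all real numbers u and v, cosh(√2·u)·cosh(√2·v) ≥ cosh(√(u² + v²)). -/
lemma aux3 (u v : ℝ) (h : |v| ≤ |u|) :
    Real.cosh (Real.sqrt 2 * u) * Real.cosh (Real.sqrt 2 * v) ≥
      Real.cosh (Real.sqrt (u ^ 2 + v ^ 2)) := by
  have h1 : Real.cosh (Real.sqrt (u ^ 2 + v ^ 2)) ≤ Real.cosh (Real.sqrt 2 * u) := by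
    rw [Real.cosh_le_cosh]
    have h2 : |Real.sqrt 2 * u| = Real.sqrt 2 * |u| := by
      rw [abs_mul, abs_of_nonneg (Real.sqrt_nonneg 2)]
    rw [h2, abs_of_nonneg (Real.sqrt_nonneg _)]
    have : Real.sqrt 2 * |u| = Real.sqrt (2 * u ^ 2) := by
      rw [Real.sqrt_mul (by norm_num), Real.sqrt_sq_eq_abs]
    rw [this]
    apply Real.sqrt_le_sqrt
    nlinarith [abs_nonneg u, abs_nonneg v, sq_abs u, sq_abs v]
  nlinarith [Real.one_le_cosh (Real.sqrt 2 * v), Real.one_le_cosh (Real.sqrt 2 * u)]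

/-- For all real `u, v`: `cosh(√2·u)·cosh(√2·v) ≥ cosh(√(u² + v²))`. -/
theorem stmt3 (u v : ℝ) :
    Real.cosh (Real.sqrt 2 * u) * Real.cosh (Real.sqrt 2 * v) ≥
      Real.cosh (Real.sqrt (u ^ 2 + v ^ 2)) := by
  rcases le_total |v| |u| with h | h
  · exact aux3 u v h
  · rw [add_comm, mul_comm]
    exact aux3 v u h
end

section
/- Let X be a metric space, K ⊆ X a nonempty compact set, B ⊆ K a nonempty closed subset, and g : X → ℝ a continuous function with g ≥ 0 on K. Suppose p ∈ K satisfies dist(p, B)·g(p) > 0, where dist(·, B) denotes the infimum of distances to points of B. Then there exists q ∈ K such that: (a) dist(q, B)·g(q) ≥ dist(p, B)·g(p) > 0, and (b) for every x ∈ K with dist(x, q) ≤ dist(q, B)/2 one has g(x) ≤ 2·g(q). -/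
/-- Point-picking argument (proof of Lemma 2 of the paper): if `g ≥ 0` is continuous on
a compact set `K`, `B ⊆ K` is closed and `dist(p, B)·g(p) > 0` for some `p ∈ K`, then
there is `q ∈ K` with `dist(q, B)·g(q) ≥ dist(p, B)·g(p) > 0` and `g ≤ 2 g(q)` on the
ball of radius `dist(q, B)/2` around `q` in `K`. -/
theorem stmt7 {X : Type*} [MetricSpace X] (K B : Set X)
    (hK : IsCompact K) (hKne : K.Nonempty) (hBK : B ⊆ K) (hB : IsClosed B)
    (hBne : B.Nonempty) (g : X → ℝ) (hg : Continuous g)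
    (hgnonneg : ∀ x ∈ K, 0 ≤ g x) (p : X) (hp : p ∈ K)
    (hppos : 0 < Metric.infDist p B * g p) :
    ∃ q ∈ K, (Metric.infDist p B * g p ≤ Metric.infDist q B * g q) ∧
      (∀ x ∈ K, dist x q ≤ Metric.infDist q B / 2 → g x ≤ 2 * g q) := by
  set f : X → ℝ := fun x => Metric.infDist x B * g x with hf
  have hfc : ContinuousOn f K :=
    ((Metric.continuous_infDist_pt B).mul hg).continuousOn
  obtain ⟨q, hqK, hqmax⟩ := hK.exists_isMaxOn hKne hfc
  have hfq : 0 < f q := lt_of_lt_of_le hppos (hqmax hp)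
  have hdq : 0 < Metric.infDist q B := by
    by_contra h
    push_neg at h
    have : Metric.infDist q B = 0 :=
      le_antisymm h (Metric.infDist_nonneg)
    simp [hf, this] at hfq
  have hgq : 0 < g q := by
    have hfq' : 0 < Metric.infDist q B * g q := hfq
    by_contra h
    push_neg at h
    nlinarith
  refine ⟨q, hqK, hqmax hp, fun x hx hdx => ?_⟩
  have htri : Metric.infDist q B ≤ Metric.infDist x B + dist q x :=
    Metric.infDist_le_infDist_add_dist
  rw [dist_comm] at hdx
  have hxB : Metric.infDist q B / 2 ≤ Metric.infDist x B := by linarith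
  have hfx : f x ≤ f q := hqmax hx
  have hgx : 0 ≤ g x := hgnonneg x hx
  simp only [hf] at hfx
  nlinarith
end
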